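/- arXiv:2007.08490 — 4 statements merged into one kernel-verified Lean document; each statement's English description precedes it below -/
import Mathlib

section
/- For all n ≥ 4, f(n) = f(n−1) + 2·f^0(n) + 2·f^1(n) − f^{0,0}(n) − 2·f^{0,1}(n) − f^{1,1}(n). -/
/-!
A reduced word is as long as the number of inversions, so stripping its first letter removes
exactly one inversion, which the letter `0` cannot do while `0` is fixed. Hence the reduced words
of a permutation fixing `0` avoid the letter `0`, and the 2-boolean permutations fixing `0` are
those of `Fin (n - 1)`, shifted up by one.

In any word for `w`, the letter `t` occurs at least as often as there are positions `i ≤ t`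
with `w i > t`, since only that letter carries an entry across the gap between the values `t`
and `t + 1`. If `w⁻¹ 0 ≤ w 0`, cutting just before the position of `0` shows that `w 0` together
with the `a(w)` entries counted by `a` cross, so `a(w) ≤ 1` for a 2-boolean `w`; otherwise
the same holds for `w⁻¹`, whose statistic `a` is `b(w)`. So the 2-boolean `w` moving `0` are
covered by `{a ≤ 1}` and `{b ≤ 1}`, two sets exchanged by inversion, and inclusion–exclusion
gives the formula.
-/

/-- The adjacent transposition swapping (0-indexed) positions `k` and `k+1` in `Fin n`;
the identity if `k+1 ≥ n`. -/
def adjTransposition (n : ℕ) (k : ℕ) : Equiv.Perm (Fin n) :=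
  if h : k + 1 < n then Equiv.swap ⟨k, Nat.lt_of_succ_lt h⟩ ⟨k + 1, h⟩ else 1

/-- `l` is a word for the permutation `w` of `Fin n`. -/
def IsWord (n : ℕ) (w : Equiv.Perm (Fin n)) (l : List ℕ) : Prop :=
  (∀ k ∈ l, k + 1 < n) ∧ w = (l.map (adjTransposition n)).prod

/-- `l` is a reduced word for `w`. -/
def IsReducedWord (n : ℕ) (w : Equiv.Perm (Fin n)) (l : List ℕ) : Prop :=
  IsWord n w l ∧ ∀ l', IsWord n w l' → l.length ≤ l'.length

/-- `w` is `k`-boolean: every letter appears at most `k` times in every reduced word. -/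
def IsKBoolean (k n : ℕ) (w : Equiv.Perm (Fin n)) : Prop :=
  ∀ l, IsReducedWord n w l → ∀ i, l.count i ≤ k

/-- `w` contains the pattern whose one-line notation is the list `p`. -/
def ContainsPattern {n : ℕ} (w : Equiv.Perm (Fin n)) (p : List ℕ) : Prop :=
  ∃ f : Fin p.length → Fin n, StrictMono f ∧
    ∀ a b : Fin p.length, w (f a) < w (f b) ↔ p.get a < p.get b

/-- `f n` is the number of 2-boolean permutations of `Fin n`. -/
noncomputable def numTwoBoolean (n : ℕ) : ℕ :=
  Nat.card {w : Equiv.Perm (Fin n) // IsKBoolean 2 n w}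

/-- `w(1) ≠ 1` in 1-indexed notation. -/
def MovesZero : {n : ℕ} → Equiv.Perm (Fin n) → Prop
  | 0, _ => False
  | _ + 1, w => w 0 ≠ 0

/-- the statistic `a(w)`. -/
noncomputable def aStat : {n : ℕ} → Equiv.Perm (Fin n) → ℕ
  | 0, _ => 0
  | _ + 1, w => Nat.card {i // 0 < i ∧ i < w⁻¹ 0 ∧ w 0 < w i}

/-- the statistic `b(w)`. -/
noncomputable def bStat : {n : ℕ} → Equiv.Perm (Fin n) → ℕ
  | 0, _ => 0
  | _ + 1, w => Nat.card {i // w⁻¹ 0 < i ∧ 0 < w i ∧ w i < w 0}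

/-- the statistic `c(w)`. -/
noncomputable def cStat : {n : ℕ} → Equiv.Perm (Fin n) → ℕ
  | 0, _ => 0
  | _ + 1, w => Nat.card {i // 0 < i ∧ i < w⁻¹ 0 ∧ 0 < w i ∧ w i < w 0}

/-- number of inversions (Coxeter length). -/
noncomputable def invCount {n : ℕ} (w : Equiv.Perm (Fin n)) : ℕ :=
  Nat.card {p : Fin n × Fin n // p.1 < p.2 ∧ w p.2 < w p.1}

noncomputable def fA (n a : ℕ) : ℕ :=
  Nat.card {w : Equiv.Perm (Fin n) // IsKBoolean 2 n w ∧ MovesZero w ∧ aStat w = a}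

noncomputable def fAB (n a b : ℕ) : ℕ :=
  Nat.card {w : Equiv.Perm (Fin n) //
    IsKBoolean 2 n w ∧ MovesZero w ∧ aStat w = a ∧ bStat w = b}

open Equiv Finset

section Words

variable {n : ℕ}

lemma adjTransposition_of_lt {k : ℕ} (h : k + 1 < n) :
    adjTransposition n k = swap ⟨k, Nat.lt_of_succ_lt h⟩ ⟨k + 1, h⟩ := dif_pos h

lemma adjTransposition_of_not_lt {k : ℕ} (h : ¬k + 1 < n) : adjTransposition n k = 1 := dif_neg h

@[simp]
lemma adjTransposition_mul_self (k : ℕ) : adjTransposition n k * adjTransposition n k = 1 := by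
  by_cases h : k + 1 < n
  · rw [adjTransposition_of_lt h, swap_mul_self]
  · rw [adjTransposition_of_not_lt h, one_mul]

@[simp]
lemma adjTransposition_inv (k : ℕ) : (adjTransposition n k)⁻¹ = adjTransposition n k :=
  inv_eq_of_mul_eq_one_left (adjTransposition_mul_self k)

lemma isWord_nil {w : Perm (Fin n)} : IsWord n w [] ↔ w = 1 := by
  simp [IsWord]

lemma isWord_cons {w : Perm (Fin n)} {j : ℕ} {l : List ℕ} :
    IsWord n w (j :: l) ↔ j + 1 < n ∧ IsWord n (adjTransposition n j * w) l := by
  simp only [IsWord, List.mem_cons, forall_eq_or_imp, List.map_cons, List.prod_cons, and_assoc]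
  refine and_congr_right fun _ => and_congr_right fun _ => ?_
  constructor
  · rintro rfl; rw [← mul_assoc, adjTransposition_mul_self, one_mul]
  · intro h; rw [← h, ← mul_assoc, adjTransposition_mul_self, one_mul]

lemma IsWord.reverse {w : Perm (Fin n)} {l : List ℕ} (h : IsWord n w l) :
    IsWord n w⁻¹ l.reverse := by
  refine ⟨fun k hk => h.1 k (List.mem_reverse.1 hk), ?_⟩
  simp [h.2, List.prod_inv_reverse, List.map_reverse, Function.comp_def]

lemma IsReducedWord.reverse {w : Perm (Fin n)} {l : List ℕ} (h : IsReducedWord n w l) :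
    IsReducedWord n w⁻¹ l.reverse :=
  ⟨h.1.reverse, fun l' hl' => by
    simpa using h.2 l'.reverse (by simpa using hl'.reverse)⟩

lemma IsKBoolean.inv {k : ℕ} {w : Perm (Fin n)} (h : IsKBoolean k n w) :
    IsKBoolean k n w⁻¹ := fun l hl i => by
  simpa using h l.reverse (by simpa using hl.reverse) i

lemma IsReducedWord.tail {w : Perm (Fin n)} {j : ℕ} {l : List ℕ}
    (h : IsReducedWord n w (j :: l)) : IsReducedWord n (adjTransposition n j * w) l :=
  ⟨(isWord_cons.1 h.1).2, fun l' hl' => by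
    simpa using h.2 (j :: l') (isWord_cons.2 ⟨(isWord_cons.1 h.1).1, hl'⟩)⟩

end Words

section Inversions

variable {n : ℕ}

def invSet (w : Perm (Fin n)) : Finset (Fin n × Fin n) :=
  {p | p.1 < p.2 ∧ w p.2 < w p.1}

lemma mem_invSet {w : Perm (Fin n)} {p : Fin n × Fin n} :
    p ∈ invSet w ↔ p.1 < p.2 ∧ w p.2 < w p.1 := by
  simp [invSet]

lemma invCount_eq_card_invSet (w : Perm (Fin n)) : invCount w = #(invSet w) := by
  rw [invCount, Nat.card_eq_fintype_card, Fintype.card_subtype, invSet]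

lemma invCount_one : invCount (1 : Perm (Fin n)) = 0 := by
  rw [invCount_eq_card_invSet, card_eq_zero, eq_empty_iff_forall_notMem]
  exact fun p hp => lt_asymm (mem_invSet.1 hp).1 (mem_invSet.1 hp).2

lemma swap_lt_swap_iff_of_adjacent {a b x y : Fin n} (hab : (b : ℕ) = a + 1)
    (h : ¬(x = a ∧ y = b)) (h' : ¬(x = b ∧ y = a)) : swap a b x < swap a b y ↔ x < y := by
  simp only [swap_apply_def]
  split_ifs <;> simp only [Fin.lt_def, Fin.ext_iff] at * <;> omega

lemma invSet_swap_mul {a b : Fin n} (hab : (b : ℕ) = a + 1) {w : Perm (Fin n)}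
    (h : w⁻¹ a < w⁻¹ b) : invSet (swap a b * w) = insert (w⁻¹ a, w⁻¹ b) (invSet w) := by
  ext ⟨i, j⟩
  simp only [mem_insert, mem_invSet, Prod.mk.injEq, Perm.mul_apply]
  by_cases hij : i = w⁻¹ a ∧ j = w⁻¹ b
  · obtain ⟨rfl, rfl⟩ := hij
    simpa using ⟨h, by rw [Fin.lt_def]; omega⟩
  · have hba : ¬(w j = b ∧ w i = a) := by
      rintro ⟨rfl, rfl⟩
      simp at hij
    by_cases hab' : w j = a ∧ w i = b
    · obtain ⟨hj, hi⟩ := hab'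
      have hji : j < i := by rw [← hj, ← hi] at h; simpa using h
      exact iff_of_false (fun hl => hji.not_gt hl.1)
        (by rintro (hp | hp); exacts [hij hp, hji.not_gt hp.1])
    · rw [swap_lt_swap_iff_of_adjacent hab hab' hba]
      tauto

lemma invCount_swap_mul_of_lt {a b : Fin n} (hab : (b : ℕ) = a + 1) {w : Perm (Fin n)}
    (h : w⁻¹ a < w⁻¹ b) : invCount (swap a b * w) = invCount w + 1 := by
  rw [invCount_eq_card_invSet, invCount_eq_card_invSet, invSet_swap_mul hab h,
    card_insert_of_notMem]
  have : ¬b < a := by rw [Fin.lt_def]; omega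
  simp [mem_invSet, this]

lemma invCount_swap_mul_of_gt {a b : Fin n} (hab : (b : ℕ) = a + 1) {w : Perm (Fin n)}
    (h : w⁻¹ b < w⁻¹ a) : invCount (swap a b * w) + 1 = invCount w := by
  have := invCount_swap_mul_of_lt hab (w := swap a b * w) (by simpa [swap_inv] using h)
  rwa [← mul_assoc, swap_mul_self, one_mul, eq_comm] at this

lemma invCount_le_invCount_adjTransposition_mul_add_one (k : ℕ) (w : Perm (Fin n)) :
    invCount w ≤ invCount (adjTransposition n k * w) + 1 := by
  by_cases hk : k + 1 < n
  · rw [adjTransposition_of_lt hk]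
    have hab : ((⟨k + 1, hk⟩ : Fin n) : ℕ) = (⟨k, Nat.lt_of_succ_lt hk⟩ : Fin n) + 1 := rfl
    rcases lt_or_gt_of_ne (w⁻¹.injective.ne (a₁ := ⟨k, Nat.lt_of_succ_lt hk⟩)
      (a₂ := ⟨k + 1, hk⟩) (by simp [Fin.ext_iff])) with h | h
    · rw [invCount_swap_mul_of_lt hab h]; omega
    · rw [← invCount_swap_mul_of_gt hab h]
  · rw [adjTransposition_of_not_lt hk, one_mul]; omega

lemma IsWord.invCount_le_length {w : Perm (Fin n)} {l : List ℕ} (h : IsWord n w l) :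
    invCount w ≤ l.length := by
  induction l generalizing w with
  | nil => simp [isWord_nil.1 h, invCount_one]
  | cons j l ih =>
    have := invCount_le_invCount_adjTransposition_mul_add_one j w
    have := ih (isWord_cons.1 h).2
    simp only [List.length_cons]
    omega

lemma eq_one_of_strictMono {w : Perm (Fin n)} (h : StrictMono w) : w = 1 := by
  ext i
  exact congrArg Fin.val (DFunLike.congr_fun
    (Subsingleton.elim (h.orderIsoOfSurjective w w.surjective) (OrderIso.refl _)) i)

lemma exists_apply_succ_lt_of_ne_one {w : Perm (Fin n)} (hw : w ≠ 1) :
    ∃ k, ∃ hk : k + 1 < n, w ⟨k + 1, hk⟩ < w ⟨k, Nat.lt_of_succ_lt hk⟩ := by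
  cases n with
  | zero => exact absurd (Subsingleton.elim w 1) hw
  | succ m =>
    contrapose! hw
    refine eq_one_of_strictMono (Fin.strictMono_iff_lt_succ.2 fun i => ?_)
    exact (hw i (by omega)).lt_of_ne (w.injective.ne (by simp [Fin.ext_iff]))

lemma exists_isWord_length_eq_invCount (w : Perm (Fin n)) :
    ∃ l, IsWord n w l ∧ l.length = invCount w := by
  induction hN : invCount w using Nat.strong_induction_on generalizing w with
  | _ N ih =>
    by_cases hw : w = 1
    · exact ⟨[], isWord_nil.2 hw, by simp [← hN, hw, invCount_one]⟩
    obtain ⟨k, hk, hdesc⟩ := exists_apply_succ_lt_of_ne_one (inv_ne_one.2 hw)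
    have hdrop := invCount_swap_mul_of_gt (w := w) rfl hdesc
    rw [← adjTransposition_of_lt hk] at hdrop
    obtain ⟨l, hl, hlen⟩ := ih (invCount (adjTransposition n k * w)) (by omega) _ rfl
    exact ⟨k :: l, isWord_cons.2 ⟨hk, hl⟩, by simp [hlen]; omega⟩

lemma IsReducedWord.length_eq_invCount {w : Perm (Fin n)} {l : List ℕ}
    (h : IsReducedWord n w l) : l.length = invCount w := by
  obtain ⟨l', hl', hlen⟩ := exists_isWord_length_eq_invCount w
  exact le_antisymm (hlen ▸ h.2 l' hl') h.1.invCount_le_length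

lemma exists_isReducedWord (w : Perm (Fin n)) : ∃ l, IsReducedWord n w l := by
  obtain ⟨l, hl, hlen⟩ := exists_isWord_length_eq_invCount w
  exact ⟨l, hl, fun l' hl' => hlen ▸ hl'.invCount_le_length⟩

lemma IsReducedWord.inv_apply_succ_lt {w : Perm (Fin n)} {j : ℕ} {l : List ℕ}
    (h : IsReducedWord n w (j :: l)) (hj : j + 1 < n) :
    w⁻¹ ⟨j + 1, hj⟩ < w⁻¹ ⟨j, Nat.lt_of_succ_lt hj⟩ := by
  have hlen := h.length_eq_invCount
  have htail := h.tail.length_eq_invCount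
  rw [adjTransposition_of_lt hj] at htail
  by_contra! hle
  have hrise := invCount_swap_mul_of_lt (w := w) rfl
    (hle.lt_of_ne (w⁻¹.injective.ne (by simp [Fin.ext_iff])))
  simp only [List.length_cons] at hlen
  omega

lemma zero_notMem_of_isReducedWord {m : ℕ} {w : Perm (Fin (m + 1))} (hw : w 0 = 0)
    {l : List ℕ} (h : IsReducedWord (m + 1) w l) : 0 ∉ l := by
  induction l generalizing w with
  | nil => simp
  | cons j l ih =>
    have hj := (isWord_cons.1 h.1).1
    have hj0 : j ≠ 0 := by
      rintro rfl
      have := h.inv_apply_succ_lt hj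
      rw [show (⟨0, _⟩ : Fin (m + 1)) = 0 from rfl, Perm.inv_eq_iff_eq.2 hw.symm] at this
      exact Fin.not_lt_zero _ this
    have hfix : (adjTransposition (m + 1) j * w) 0 = 0 := by
      rw [Perm.mul_apply, hw, adjTransposition_of_lt hj,
        swap_apply_of_ne_of_ne (by simp [Fin.ext_iff, Ne.symm hj0]) (by simp [Fin.ext_iff])]
    simpa [Ne.symm hj0] using ih hfix h.tail

end Inversions

section Crossings

variable {n : ℕ}

lemma lt_swap_apply_iff_of_ne {a b t v : Fin n} (hab : (b : ℕ) = a + 1) (ht : a ≠ t) :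
    t < swap a b v ↔ t < v := by
  simp only [swap_apply_def]
  split_ifs <;> simp only [Fin.lt_def, Fin.ext_iff, ne_eq] at * <;> omega

lemma card_crossing_adjTransposition_mul_le (j : ℕ) (w : Perm (Fin n)) (t : Fin n) :
    #{i | i ≤ t ∧ t < (adjTransposition n j * w) i} ≤
      #{i | i ≤ t ∧ t < w i} + if j = t then 1 else 0 := by
  by_cases hj : j + 1 < n
  · rw [adjTransposition_of_lt hj]
    set a : Fin n := ⟨j, Nat.lt_of_succ_lt hj⟩
    set b : Fin n := ⟨j + 1, hj⟩
    have hab : (b : ℕ) = a + 1 := rfl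
    split_ifs with hjt
    · refine (card_le_card fun i hi => ?_).trans (card_insert_le (w⁻¹ a) _)
      rw [mem_filter, Perm.mul_apply] at hi
      rw [mem_insert, mem_filter]
      by_cases hwi : w i = a
      · exact Or.inl (by rw [← hwi]; simp)
      · refine Or.inr ⟨mem_univ _, hi.2.1, ?_⟩
        have hlt := hi.2.2
        rcases eq_or_ne (w i) b with hwb | hwb
        · have hbt : (b : ℕ) = t + 1 := by simp [b, hjt]
          rw [hwb, Fin.lt_def]; omega
        · rwa [swap_apply_of_ne_of_ne hwi hwb] at hlt
    · simp [lt_swap_apply_iff_of_ne hab (fun h => hjt (congrArg Fin.val h))]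
  · simp [adjTransposition_of_not_lt hj]

lemma IsWord.card_crossing_le_count {w : Perm (Fin n)} {l : List ℕ} (h : IsWord n w l)
    (t : Fin n) : #{i | i ≤ t ∧ t < w i} ≤ l.count (t : ℕ) := by
  induction l generalizing w with
  | nil =>
    rw [isWord_nil.1 h, card_eq_zero.2 (filter_eq_empty_iff.2 fun i _ hi => hi.1.not_gt hi.2)]
    exact Nat.zero_le _
  | cons j l ih =>
    have hw : w = adjTransposition n j * (adjTransposition n j * w) := by
      rw [← mul_assoc, adjTransposition_mul_self, one_mul]
    have := card_crossing_adjTransposition_mul_le j (adjTransposition n j * w) t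
    rw [← hw] at this
    have := ih (isWord_cons.1 h).2
    simp only [List.count_cons, beq_iff_eq]
    split_ifs at * <;> omega

lemma IsKBoolean.card_crossing_le {k : ℕ} {w : Perm (Fin n)} (hw : IsKBoolean k n w)
    (t : Fin n) : #{i | i ≤ t ∧ t < w i} ≤ k := by
  obtain ⟨l, hl⟩ := exists_isReducedWord w
  exact (hl.1.card_crossing_le_count t).trans (hw l hl t)

end Crossings

section Statistics

variable {m k : ℕ}

lemma isKBoolean_inv_iff {n : ℕ} {w : Perm (Fin n)} : IsKBoolean k n w⁻¹ ↔ IsKBoolean k n w :=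
  ⟨fun h => inv_inv w ▸ h.inv, IsKBoolean.inv⟩

lemma movesZero_inv_iff {w : Perm (Fin (m + 1))} : MovesZero w⁻¹ ↔ MovesZero w :=
  not_congr (Perm.inv_eq_iff_eq.trans eq_comm)

lemma aStat_inv (w : Perm (Fin (m + 1))) : aStat w⁻¹ = bStat w := by
  refine (Nat.card_congr (w.subtypeEquiv fun i => ?_)).symm
  simp only [Perm.inv_def, symm_apply_apply]
  tauto

lemma bStat_inv (w : Perm (Fin (m + 1))) : bStat w⁻¹ = aStat w := by
  rw [← aStat_inv, inv_inv]

lemma aStat_eq_card (w : Perm (Fin (m + 1))) :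
    aStat w = #{i | 0 < i ∧ i < w⁻¹ 0 ∧ w 0 < w i} := by
  rw [aStat, Nat.card_eq_fintype_card, Fintype.card_subtype]

lemma aStat_lt_of_isKBoolean {w : Perm (Fin (m + 1))} (hk : IsKBoolean k (m + 1) w)
    (h0 : MovesZero w) (hle : w⁻¹ 0 ≤ w 0) : aStat w < k := by
  have hpos : w⁻¹ 0 ≠ 0 := movesZero_inv_iff.2 h0
  set t : Fin (m + 1) := ⟨(w⁻¹ 0 : ℕ) - 1, by omega⟩
  have hsub : insert 0 ({i | 0 < i ∧ i < w⁻¹ 0 ∧ w 0 < w i} : Finset (Fin (m + 1))) ⊆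
      ({i | i ≤ t ∧ t < w i} : Finset (Fin (m + 1))) := by
    intro i hi
    simp only [mem_insert, mem_filter, mem_univ, true_and] at hi ⊢
    have : (0 : ℕ) < w⁻¹ 0 := Nat.pos_of_ne_zero (Fin.val_ne_of_ne hpos)
    rcases hi with rfl | ⟨-, hi, hlt⟩ <;>
      simp only [Fin.le_def, Fin.lt_def, Fin.val_zero, t] at * <;> omega
  have hcard := (card_le_card hsub).trans (hk.card_crossing_le t)
  rw [card_insert_of_notMem (by simp)] at hcard
  rw [aStat_eq_card]
  omega

lemma bStat_lt_of_isKBoolean {w : Perm (Fin (m + 1))} (hk : IsKBoolean k (m + 1) w)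
    (h0 : MovesZero w) (hle : w 0 ≤ w⁻¹ 0) : bStat w < k := by
  rw [← aStat_inv]
  exact aStat_lt_of_isKBoolean hk.inv (movesZero_inv_iff.2 h0) (by rwa [inv_inv])

lemma aStat_lt_or_bStat_lt {w : Perm (Fin (m + 1))} (hk : IsKBoolean k (m + 1) w)
    (h0 : MovesZero w) : aStat w < k ∨ bStat w < k :=
  (le_total (w⁻¹ 0) (w 0)).imp (aStat_lt_of_isKBoolean hk h0) (bStat_lt_of_isKBoolean hk h0)

end Statistics

section FixingZero

variable {m : ℕ}

def permSuccHom (m : ℕ) : Perm (Fin m) →* Perm (Fin (m + 1)) where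
  toFun σ := Perm.decomposeFin.symm (0, σ)
  map_one' := by rw [Perm.decomposeFin_symm_of_one, swap_self, Perm.one_def]
  map_mul' σ τ := by
    ext i
    cases i using Fin.cases <;> simp

@[simp]
lemma permSuccHom_apply_zero (σ : Perm (Fin m)) : permSuccHom m σ 0 = 0 :=
  Perm.decomposeFin_symm_apply_zero 0 σ

@[simp]
lemma permSuccHom_apply_succ (σ : Perm (Fin m)) (i : Fin m) :
    permSuccHom m σ i.succ = (σ i).succ := by
  simp [permSuccHom]

lemma permSuccHom_injective : Function.Injective (permSuccHom m) :=
  fun _ _ h => (Prod.ext_iff.1 (Perm.decomposeFin.symm.injective h)).2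

lemma range_permSuccHom : Set.range (permSuccHom m) = {w | w 0 = 0} := by
  ext w
  refine ⟨by rintro ⟨σ, rfl⟩; simp, fun hw => ?_⟩
  obtain ⟨⟨p, σ⟩, rfl⟩ := Perm.decomposeFin.symm.surjective w
  obtain rfl : p = 0 := by simpa using hw
  exact ⟨σ, rfl⟩

lemma permSuccHom_swap (x y : Fin m) : permSuccHom m (swap x y) = swap x.succ y.succ := by
  ext i
  cases i using Fin.cases with
  | zero => simp [swap_apply_of_ne_of_ne (Fin.succ_ne_zero x).symm (Fin.succ_ne_zero y).symm]
  | succ i => simp [swap_apply_def, apply_ite Fin.succ]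

lemma permSuccHom_adjTransposition (k : ℕ) :
    permSuccHom m (adjTransposition m k) = adjTransposition (m + 1) (k + 1) := by
  by_cases hk : k + 1 < m
  · rw [adjTransposition_of_lt hk, adjTransposition_of_lt (by omega), permSuccHom_swap]
    rfl
  · rw [adjTransposition_of_not_lt hk, adjTransposition_of_not_lt (by omega), map_one]

lemma isWord_permSuccHom_iff {σ : Perm (Fin m)} {l : List ℕ} :
    IsWord (m + 1) (permSuccHom m σ) (l.map (· + 1)) ↔ IsWord m σ l := by
  have hprod : ((l.map (· + 1)).map (adjTransposition (m + 1))).prod =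
      permSuccHom m (l.map (adjTransposition m)).prod := by
    simp [map_list_prod, Function.comp_def, permSuccHom_adjTransposition]
  simp only [IsWord, hprod, permSuccHom_injective.eq_iff, List.mem_map, forall_exists_index,
    and_imp, forall_apply_eq_imp_iff₂, add_lt_add_iff_right]

lemma exists_eq_map_add_one_of_isReducedWord_permSuccHom {σ : Perm (Fin m)} {l : List ℕ}
    (h : IsReducedWord (m + 1) (permSuccHom m σ) l) : ∃ l' : List ℕ, l = l'.map (· + 1) := by
  have h0 := zero_notMem_of_isReducedWord (permSuccHom_apply_zero σ) h
  refine ⟨l.map (· - 1), ?_⟩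
  rw [List.map_map]
  conv_lhs => rw [← List.map_id l]
  refine List.map_congr_left fun x hx => ?_
  have : x ≠ 0 := fun h => h0 (h ▸ hx)
  simp only [id, Function.comp_apply]
  omega

lemma isReducedWord_permSuccHom_iff {σ : Perm (Fin m)} {l : List ℕ} :
    IsReducedWord (m + 1) (permSuccHom m σ) (l.map (· + 1)) ↔ IsReducedWord m σ l := by
  refine ⟨fun h => ⟨isWord_permSuccHom_iff.1 h.1, fun l' hl' => ?_⟩,
    fun h => ⟨isWord_permSuccHom_iff.2 h.1, fun L hL => ?_⟩⟩
  · simpa using h.2 _ (isWord_permSuccHom_iff.2 hl')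
  · obtain ⟨R, hR⟩ := exists_isReducedWord (permSuccHom m σ)
    obtain ⟨r, rfl⟩ := exists_eq_map_add_one_of_isReducedWord_permSuccHom hR
    have := h.2 r (isWord_permSuccHom_iff.1 hR.1)
    have := hR.2 L hL
    simp only [List.length_map] at *
    omega

lemma isKBoolean_permSuccHom_iff {k : ℕ} {σ : Perm (Fin m)} :
    IsKBoolean k (m + 1) (permSuccHom m σ) ↔ IsKBoolean k m σ := by
  have hcount (l : List ℕ) (i : ℕ) : (l.map (· + 1)).count (i + 1) = l.count i :=
    List.count_map_of_injective _ _ (add_left_injective 1) _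
  refine ⟨fun h l hl i => ?_, fun h L hL i => ?_⟩
  · simpa [hcount] using h _ (isReducedWord_permSuccHom_iff.2 hl) (i + 1)
  · obtain ⟨l, rfl⟩ := exists_eq_map_add_one_of_isReducedWord_permSuccHom hL
    cases i with
    | zero => simp [List.count_eq_zero.2]
    | succ i => simpa [hcount] using h l (isReducedWord_permSuccHom_iff.1 hL) i

end FixingZero

lemma ncard_isKBoolean_succ (k m : ℕ) :
    {w : Perm (Fin (m + 1)) | IsKBoolean k (m + 1) w}.ncard =
      {σ : Perm (Fin m) | IsKBoolean k m σ}.ncard +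
        {w : Perm (Fin (m + 1)) | IsKBoolean k (m + 1) w ∧ MovesZero w}.ncard := by
  rw [← Set.ncard_inter_add_ncard_sdiff_eq_ncard _ {w | w 0 = 0},
    ← Set.ncard_image_of_injective {σ | IsKBoolean k m σ} permSuccHom_injective]
  congr 2
  ext w
  simp only [Set.mem_inter_iff, Set.mem_ofPred_eq, Set.mem_image]
  constructor
  · rintro ⟨hk, hw⟩
    obtain ⟨σ, rfl⟩ := range_permSuccHom.ge hw
    exact ⟨σ, isKBoolean_permSuccHom_iff.1 hk, rfl⟩
  · rintro ⟨σ, hk, rfl⟩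
    exact ⟨isKBoolean_permSuccHom_iff.2 hk, permSuccHom_apply_zero σ⟩

lemma ncard_setOf_le_one_and {α : Type*} [Finite α] (s : α → ℕ) (p : α → Prop) :
    {x | s x ≤ 1 ∧ p x}.ncard = {x | s x = 0 ∧ p x}.ncard + {x | s x = 1 ∧ p x}.ncard := by
  rw [← Set.ncard_union_eq]
  · congr 1
    ext x
    simp only [Set.mem_union, Set.mem_ofPred_eq, ← or_and_right,
      Nat.le_one_iff_eq_zero_or_eq_one]
  · exact Set.disjoint_left.2 fun x h0 h1 => by
      simp only [Set.mem_ofPred_eq] at h0 h1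
      omega

lemma fA_eq_ncard (n a : ℕ) :
    fA n a = {w | aStat w = a ∧ IsKBoolean 2 n w ∧ MovesZero w}.ncard := by
  rw [fA, ← Nat.card_coe_set_eq]
  exact Nat.card_congr (Equiv.subtypeEquivRight fun w => by rw [Set.mem_ofPred_eq]; tauto)

lemma fAB_eq_ncard (n a b : ℕ) :
    fAB n a b = {w | aStat w = a ∧ bStat w = b ∧ IsKBoolean 2 n w ∧ MovesZero w}.ncard := by
  rw [fAB, ← Nat.card_coe_set_eq]
  exact Nat.card_congr (Equiv.subtypeEquivRight fun w => by rw [Set.mem_ofPred_eq]; tauto)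

lemma ncard_bStat_le_one_aStat_le_one (n : ℕ) :
    {w : Perm (Fin n) | bStat w ≤ 1 ∧ aStat w ≤ 1 ∧ IsKBoolean 2 n w ∧ MovesZero w}.ncard =
      fAB n 0 0 + fAB n 1 0 + (fAB n 0 1 + fAB n 1 1) := by
  have hcomm (j : ℕ) :
      {w : Perm (Fin n) | bStat w = j ∧ aStat w ≤ 1 ∧ IsKBoolean 2 n w ∧ MovesZero w} =
        {w | aStat w ≤ 1 ∧ bStat w = j ∧ IsKBoolean 2 n w ∧ MovesZero w} :=
    Set.ext fun _ => and_left_comm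
  rw [ncard_setOf_le_one_and, hcomm, hcomm, ncard_setOf_le_one_and, ncard_setOf_le_one_and,
    fAB_eq_ncard, fAB_eq_ncard, fAB_eq_ncard, fAB_eq_ncard]

lemma fAB_comm (m a b : ℕ) : fAB (m + 1) a b = fAB (m + 1) b a := by
  rw [fAB_eq_ncard, fAB_eq_ncard, ← Set.ncard_inv]
  congr 1
  ext w
  simp only [Set.mem_inv, Set.mem_ofPred_eq, aStat_inv, bStat_inv, isKBoolean_inv_iff,
    movesZero_inv_iff]
  exact and_left_comm

lemma ncard_isKBoolean_two_movesZero (m : ℕ) :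
    ({w : Perm (Fin (m + 1)) | IsKBoolean 2 (m + 1) w ∧ MovesZero w}.ncard : ℤ) =
      2 * fA (m + 1) 0 + 2 * fA (m + 1) 1
        - fAB (m + 1) 0 0 - 2 * fAB (m + 1) 0 1 - fAB (m + 1) 1 1 := by
  set P : Perm (Fin (m + 1)) → Prop := fun w => IsKBoolean 2 (m + 1) w ∧ MovesZero w
  set A := {w | aStat w ≤ 1 ∧ P w}
  set B := {w | bStat w ≤ 1 ∧ P w}
  have hcover : A ∪ B = Set.ofPred P := by
    ext w
    simp only [A, B, Set.mem_union, Set.mem_ofPred_eq, ← or_and_right, and_iff_right_iff_imp]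
    exact fun hw => (aStat_lt_or_bStat_lt hw.1 hw.2).imp Nat.le_of_lt_succ Nat.le_of_lt_succ
  have hA : A.ncard = fA (m + 1) 0 + fA (m + 1) 1 := by
    rw [ncard_setOf_le_one_and, fA_eq_ncard, fA_eq_ncard]
  have hB : B.ncard = A.ncard := by
    rw [← Set.ncard_inv A]
    congr 1
    ext w
    simp [A, B, P, aStat_inv, isKBoolean_inv_iff, movesZero_inv_iff]
  have hAB : A ∩ B = {w | bStat w ≤ 1 ∧ aStat w ≤ 1 ∧ P w} := by
    ext w
    simp only [A, B, Set.mem_inter_iff, Set.mem_ofPred_eq]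
    tauto
  have hIE := Set.ncard_union_add_ncard_inter A B
  rw [hcover, hAB, ncard_bStat_le_one_aStat_le_one, fAB_comm m 1 0] at hIE
  omega

/-- for `n ≥ 4`,
`f(n) = f(n−1) + 2 f⁰(n) + 2 f¹(n) − f⁰⁰(n) − 2 f⁰¹(n) − f¹¹(n)`. -/
theorem two_boolean_inclusion_exclusion (n : ℕ) (hn : 4 ≤ n) :
    (numTwoBoolean n : ℤ) =
      numTwoBoolean (n - 1) + 2 * fA n 0 + 2 * fA n 1
        - fAB n 0 0 - 2 * fAB n 0 1 - fAB n 1 1 := by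
  obtain ⟨m, rfl⟩ : ∃ m, n = m + 1 := ⟨n - 1, by omega⟩
  have hsplit : numTwoBoolean (m + 1) = numTwoBoolean m +
      {w : Perm (Fin (m + 1)) | IsKBoolean 2 (m + 1) w ∧ MovesZero w}.ncard :=
    ncard_isKBoolean_succ 2 m
  rw [hsplit, Nat.add_sub_cancel, Nat.cast_add, ncard_isKBoolean_two_movesZero]
  ring
end

section
/- If w is a permutation of {1,…,n} with w(1) ≠ 1 that avoids the patterns 3421, 4312, 4321, and 456123, then a(w) ≤ 1 or b(w) ≤ 1. -/
/-! Take two positions `i₁ < i₂` counted by `a(w)` and two positions `j₁ < j₂` counted by `b(w)`,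
so that `1 < i₁ < i₂ < w⁻¹(1) < j₁ < j₂`. If `w(i₁) > w(i₂)`, then `i₁ i₂ w⁻¹(1) j₁` is a 4312;
if `w(i₁) < w(i₂)` and `w(j₁) > w(j₂)`, then `i₁ i₂ j₁ j₂` is a 3421; otherwise
`1 i₁ i₂ w⁻¹(1) j₁ j₂` is a 456123. -/

section Patterns

variable {n : ℕ} {w : Equiv.Perm (Fin n)}

theorem containsPattern_of_forall_lt {p : List ℕ} (hp : p.Nodup) (f : Fin p.length → Fin n)
    (hf : StrictMono f) (hlt : ∀ a b, p.get a < p.get b → w (f a) < w (f b)) :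
    ContainsPattern w p := by
  refine ⟨f, hf, fun a b => ⟨fun hw => ?_, hlt a b⟩⟩
  rcases lt_trichotomy (p.get a) (p.get b) with hab | hab | hab
  · exact hab
  · cases List.nodup_iff_injective_get.mp hp hab
    exact absurd hw (lt_irrefl _)
  · exact absurd (hlt b a hab) hw.asymm

theorem containsPattern_3421 {i₁ i₂ i₃ i₄ : Fin n} (h₁₂ : i₁ < i₂) (h₂₃ : i₂ < i₃)
    (h₃₄ : i₃ < i₄) (hw : w i₄ < w i₃ ∧ w i₃ < w i₁ ∧ w i₁ < w i₂) :
    ContainsPattern w [3, 4, 2, 1] := by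
  refine containsPattern_of_forall_lt (by decide) ![i₁, i₂, i₃, i₄]
    (Fin.strictMono_iff_lt_succ.2 (by simp [Fin.forall_fin_succ, *])) ?_
  intro a b hab
  fin_cases a <;> fin_cases b <;> simp at hab ⊢ <;> order

theorem containsPattern_4312 {i₁ i₂ i₃ i₄ : Fin n} (h₁₂ : i₁ < i₂) (h₂₃ : i₂ < i₃)
    (h₃₄ : i₃ < i₄) (hw : w i₃ < w i₄ ∧ w i₄ < w i₂ ∧ w i₂ < w i₁) :
    ContainsPattern w [4, 3, 1, 2] := by
  refine containsPattern_of_forall_lt (by decide) ![i₁, i₂, i₃, i₄]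
    (Fin.strictMono_iff_lt_succ.2 (by simp [Fin.forall_fin_succ, *])) ?_
  intro a b hab
  fin_cases a <;> fin_cases b <;> simp at hab ⊢ <;> order

theorem containsPattern_456123 {i₁ i₂ i₃ i₄ i₅ i₆ : Fin n} (h₁₂ : i₁ < i₂) (h₂₃ : i₂ < i₃)
    (h₃₄ : i₃ < i₄) (h₄₅ : i₄ < i₅) (h₅₆ : i₅ < i₆)
    (hw : w i₄ < w i₅ ∧ w i₅ < w i₆ ∧ w i₆ < w i₁ ∧ w i₁ < w i₂ ∧ w i₂ < w i₃) :
    ContainsPattern w [4, 5, 6, 1, 2, 3] := by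
  refine containsPattern_of_forall_lt (by decide) ![i₁, i₂, i₃, i₄, i₅, i₆]
    (Fin.strictMono_iff_lt_succ.2 (by simp [Fin.forall_fin_succ, *])) ?_
  intro a b hab
  fin_cases a <;> fin_cases b <;> simp at hab ⊢ <;> order

end Patterns

theorem exists_lt_of_one_lt_natCard {α : Type*} [LinearOrder α] {p : α → Prop}
    (h : 1 < Nat.card {x // p x}) : ∃ x y, x < y ∧ p x ∧ p y := by
  have : Finite {x // p x} := Nat.finite_of_card_ne_zero (by omega)
  have := Finite.one_lt_card_iff_nontrivial.mp h
  obtain ⟨⟨x, hx⟩, ⟨y, hy⟩, hxy⟩ := exists_pair_lt {x // p x}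
  exact ⟨x, y, hxy, hx, hy⟩

theorem aStat_or_bStat_le_one_general (n : ℕ) (w : Equiv.Perm (Fin (n + 1)))
    (h1 : ¬ ContainsPattern w [3, 4, 2, 1]) (h2 : ¬ ContainsPattern w [4, 3, 1, 2])
    (h4 : ¬ ContainsPattern w [4, 5, 6, 1, 2, 3]) :
    aStat w ≤ 1 ∨ bStat w ≤ 1 := by
  by_contra! h
  obtain ⟨i₁, i₂, hi, ⟨hi₁0, -, hwi₁⟩, ⟨-, hi₂z, hwi₂⟩⟩ :=
    exists_lt_of_one_lt_natCard (p := fun i => 0 < i ∧ i < w⁻¹ 0 ∧ w 0 < w i) h.1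
  obtain ⟨j₁, j₂, hj, ⟨hzj₁, hwj₁0, hwj₁⟩, ⟨-, hwj₂0, hwj₂⟩⟩ :=
    exists_lt_of_one_lt_natCard (p := fun j => w⁻¹ 0 < j ∧ 0 < w j ∧ w j < w 0) h.2
  have hwz : w (w⁻¹ 0) = 0 := w.apply_symm_apply 0
  rcases lt_or_gt_of_ne (w.injective.ne hi.ne) with hwi | hwi
  · rcases lt_or_gt_of_ne (w.injective.ne hj.ne) with hwj | hwj
    · exact h4 (containsPattern_456123 hi₁0 hi hi₂z hzj₁ hj
        ⟨by rwa [hwz], hwj, hwj₂, hwi₁, hwi⟩)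
    · exact h1 (containsPattern_3421 hi (hi₂z.trans hzj₁) hj ⟨hwj, hwj₁.trans hwi₁, hwi⟩)
  · exact h2 (containsPattern_4312 hi hi₂z hzj₁ ⟨by rwa [hwz], hwj₁.trans hwi₂, hwi⟩)

/-- if `w(1) ≠ 1` and `w` avoids 3421, 4312, 4321, 456123, then
`a(w) ≤ 1` or `b(w) ≤ 1`. -/
theorem aStat_or_bStat_le_one (n : ℕ) (w : Equiv.Perm (Fin (n + 1))) (hw : w 0 ≠ 0)
    (h1 : ¬ ContainsPattern w [3, 4, 2, 1]) (h2 : ¬ ContainsPattern w [4, 3, 1, 2])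
    (h3 : ¬ ContainsPattern w [4, 3, 2, 1]) (h4 : ¬ ContainsPattern w [4, 5, 6, 1, 2, 3]) :
    aStat w ≤ 1 ∨ bStat w ≤ 1 :=
  aStat_or_bStat_le_one_general n w h1 h2 h4
end

section
/- Let w be a permutation of {1,…,n} with w(1) ≠ 1 that avoids the patterns 3421, 4312, 4321, and 456123, and let c = c(w). Then the set {i : 1 < i < w⁻¹(1) and 1 < w(i) < w(1)} equals {2, 3, …, c+1}, and w(i) = i for every i with 2 ≤ i ≤ c+1. -/
/-!
Let `z = w⁻¹ 0`. Avoiding 3421 (with `0` in front and `z` at the end) makes the c-positions an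
initial segment `1, …, c` of the positive positions, and avoiding 4321 makes `w` increasing on it;
hence `w i ≥ i` there. Conversely, a positive value `v < w i` cannot sit to the right of a
c-position `i`: between `i` and `z` it would break monotonicity, beyond `z` it would complete a
4312. So `w⁻¹` maps `1, …, w i - 1` into `1, …, i - 1`, giving `w i ≤ i`.
-/

lemma ContainsPattern.of_four {n : ℕ} {w : Equiv.Perm (Fin n)} {p : List ℕ} (hp : p.length = 4)
    (x : Fin 4 → Fin n) (hx : StrictMono x)
    (h : ∀ a b : Fin 4, w (x a) < w (x b) ↔ p.get (a.cast hp.symm) < p.get (b.cast hp.symm)) :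
    ContainsPattern w p :=
  ⟨x ∘ Fin.cast hp, hx.comp (Fin.cast_strictMono hp),
    fun a b => by simpa using h (a.cast hp) (b.cast hp)⟩

lemma strictMono_four {α : Type*} [Preorder α] {x₀ x₁ x₂ x₃ : α}
    (h₀₁ : x₀ < x₁) (h₁₂ : x₁ < x₂) (h₂₃ : x₂ < x₃) : StrictMono ![x₀, x₁, x₂, x₃] :=
  Fin.strictMono_iff_lt_succ.2 fun i => by fin_cases i <;> assumption

section Patterns

variable {n : ℕ} {w : Equiv.Perm (Fin n)} {x₀ x₁ x₂ x₃ : Fin n}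

lemma containsPattern_3421_s14 (h₀₁ : x₀ < x₁) (h₁₂ : x₁ < x₂) (h₂₃ : x₂ < x₃)
    (v₃₂ : w x₃ < w x₂) (v₂₀ : w x₂ < w x₀) (v₀₁ : w x₀ < w x₁) :
    ContainsPattern w [3, 4, 2, 1] := by
  refine .of_four rfl _ (strictMono_four h₀₁ h₁₂ h₂₃) fun a b => ?_
  simp only [Fin.lt_def] at *
  fin_cases a <;> fin_cases b <;> simp <;> omega

lemma containsPattern_4312_s14 (h₀₁ : x₀ < x₁) (h₁₂ : x₁ < x₂) (h₂₃ : x₂ < x₃)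
    (v₂₃ : w x₂ < w x₃) (v₃₁ : w x₃ < w x₁) (v₁₀ : w x₁ < w x₀) :
    ContainsPattern w [4, 3, 1, 2] := by
  refine .of_four rfl _ (strictMono_four h₀₁ h₁₂ h₂₃) fun a b => ?_
  simp only [Fin.lt_def] at *
  fin_cases a <;> fin_cases b <;> simp <;> omega

lemma containsPattern_4321 (h₀₁ : x₀ < x₁) (h₁₂ : x₁ < x₂) (h₂₃ : x₂ < x₃)
    (v₃₂ : w x₃ < w x₂) (v₂₁ : w x₂ < w x₁) (v₁₀ : w x₁ < w x₀) :
    ContainsPattern w [4, 3, 2, 1] := by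
  refine .of_four rfl _ (strictMono_four h₀₁ h₁₂ h₂₃) fun a b => ?_
  simp only [Fin.lt_def] at *
  fin_cases a <;> fin_cases b <;> simp <;> omega

end Patterns

lemma Finset.mem_iff_pos_and_le_card {n : ℕ} {S : Finset (Fin (n + 1))} (hS₀ : ∀ i ∈ S, 0 < i)
    (hS : ∀ i ∈ S, ∀ j, 0 < j → j < i → j ∈ S) (i : Fin (n + 1)) :
    i ∈ S ↔ 0 < i ∧ (i : ℕ) ≤ S.card := by
  constructor
  · intro hi
    refine ⟨hS₀ i hi, ?_⟩
    calc (i : ℕ) = (Finset.Ioc 0 i).card := by simp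
      _ ≤ S.card := Finset.card_le_card fun j hj => by
        obtain ⟨hj₀, hji⟩ := Finset.mem_Ioc.1 hj
        exact hji.lt_or_eq.elim (hS i hi j hj₀) (· ▸ hi)
  · rintro ⟨hi₀, hiS⟩
    by_contra hi
    have hsub : S ⊆ Finset.Ioo 0 i := fun j hj => Finset.mem_Ioo.2 ⟨hS₀ j hj,
      lt_of_le_of_ne (not_lt.1 fun hij => hi (hS j hj i hi₀ hij)) (by rintro rfl; exact hi hj)⟩
    have := Finset.card_le_card hsub
    simp only [Fin.card_Ioo, Fin.val_zero] at this
    rw [Fin.lt_def] at hi₀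
    omega

section CPositions

variable {n : ℕ} {w : Equiv.Perm (Fin (n + 1))} {i j : Fin (n + 1)}

/-- The positions counted by `c(w)`, 0-indexed. -/
def IsCPosition (w : Equiv.Perm (Fin (n + 1))) (i : Fin (n + 1)) : Prop :=
  0 < i ∧ i < w⁻¹ 0 ∧ 0 < w i ∧ w i < w 0

lemma cStat_eq_card : cStat w = Nat.card {i // IsCPosition w i} := rfl

lemma IsCPosition.of_lt (h₁ : ¬ ContainsPattern w [3, 4, 2, 1]) (hi : IsCPosition w i)
    (hj₀ : 0 < j) (hji : j < i) : IsCPosition w j := by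
  obtain ⟨hi₀, hiz, hwi₀, hwi⟩ := hi
  have hjz : j < w⁻¹ 0 := hji.trans hiz
  have hwj₀ : 0 < w j := by
    rw [pos_iff_ne_zero, Ne, ← Equiv.Perm.eq_inv_iff_eq]; exact hjz.ne
  refine ⟨hj₀, hjz, hwj₀, lt_of_le_of_ne (not_lt.1 fun h₀j => h₁ ?_) ?_⟩
  · exact containsPattern_3421_s14 hj₀ hji hiz (by simpa using hwi₀) hwi h₀j
  · exact w.injective.ne hj₀.ne'

lemma IsCPosition.apply_lt_apply (h₃ : ¬ ContainsPattern w [4, 3, 2, 1]) (hi : IsCPosition w i)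
    (hj : IsCPosition w j) (hij : i < j) : w i < w j :=
  lt_of_le_of_ne (not_lt.1 fun hji => h₃ <|
    containsPattern_4321 hi.1 hij hj.2.1 (by simpa using hj.2.2.1) hji hi.2.2.2)
    (w.injective.ne hij.ne)

lemma IsCPosition.symm_apply_mem_Ioo (h₂ : ¬ ContainsPattern w [4, 3, 1, 2])
    (h₃ : ¬ ContainsPattern w [4, 3, 2, 1]) (hi : IsCPosition w i) {v : Fin (n + 1)}
    (hv₀ : 0 < v) (hvi : v < w i) : w⁻¹ v ∈ Finset.Ioo 0 i := by
  have hwq : w (w⁻¹ v) = v := w.apply_symm_apply v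
  generalize w⁻¹ v = q at hwq ⊢
  have hq₀ : q ≠ 0 := by rintro h; rw [h] at hwq; exact (hwq ▸ hvi).not_gt hi.2.2.2
  have hqz : q ≠ w⁻¹ 0 := by rw [Ne, Equiv.Perm.eq_inv_iff_eq, hwq]; exact hv₀.ne'
  refine Finset.mem_Ioo.2 ⟨pos_iff_ne_zero.2 hq₀, lt_of_not_ge fun hiq => ?_⟩
  rcases hiq.lt_or_eq with hiq | rfl
  · rcases lt_or_gt_of_ne hqz with hqz | hzq
    · have hq : IsCPosition w q :=
        ⟨pos_iff_ne_zero.2 hq₀, hqz, hwq ▸ hv₀, hwq ▸ hvi.trans hi.2.2.2⟩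
      exact (hi.apply_lt_apply h₃ hq hiq).not_gt (hwq ▸ hvi)
    · exact h₂ <| containsPattern_4312_s14 hi.1 hi.2.1 hzq (by simpa [hwq] using hv₀) (hwq ▸ hvi)
        hi.2.2.2
  · exact hvi.ne hwq.symm

lemma IsCPosition.le_apply (h₁ : ¬ ContainsPattern w [3, 4, 2, 1])
    (h₃ : ¬ ContainsPattern w [4, 3, 2, 1]) (hi : IsCPosition w i) : i ≤ w i := by
  have hcard := Finset.card_le_card_of_injOn (s := Finset.Ioc 0 i) (t := Finset.Ioc 0 (w i)) w
    (fun j hj => by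
      obtain ⟨hj₀, hji⟩ := Finset.mem_Ioc.1 hj
      rcases hji.lt_or_eq with hji | rfl
      · have hj := hi.of_lt h₁ hj₀ hji
        exact Finset.mem_Ioc.2 ⟨hj.2.2.1, (hj.apply_lt_apply h₃ hi hji).le⟩
      · exact Finset.mem_Ioc.2 ⟨hi.2.2.1, le_rfl⟩)
    w.injective.injOn
  simp only [Fin.card_Ioc, Fin.val_zero, Nat.sub_zero] at hcard
  exact Fin.le_def.2 hcard

lemma IsCPosition.apply_le (h₂ : ¬ ContainsPattern w [4, 3, 1, 2])
    (h₃ : ¬ ContainsPattern w [4, 3, 2, 1]) (hi : IsCPosition w i) : w i ≤ i := by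
  have hcard := Finset.card_le_card_of_injOn (w⁻¹ : Equiv.Perm _)
    (fun v hv => hi.symm_apply_mem_Ioo h₂ h₃ (Finset.mem_Ioo.1 hv).1 (Finset.mem_Ioo.1 hv).2)
    (w⁻¹).injective.injOn
  have hi₀ := hi.1
  simp only [Fin.card_Ioo, Fin.val_zero] at hcard
  rw [Fin.lt_def] at hi₀
  rw [Fin.le_def]
  omega

lemma IsCPosition.apply_eq (h₁ : ¬ ContainsPattern w [3, 4, 2, 1])
    (h₂ : ¬ ContainsPattern w [4, 3, 1, 2]) (h₃ : ¬ ContainsPattern w [4, 3, 2, 1])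
    (hi : IsCPosition w i) : w i = i :=
  (hi.apply_le h₂ h₃).antisymm (hi.le_apply h₁ h₃)

lemma isCPosition_iff_le_cStat (h₁ : ¬ ContainsPattern w [3, 4, 2, 1]) (i : Fin (n + 1)) :
    IsCPosition w i ↔ 1 ≤ (i : ℕ) ∧ (i : ℕ) ≤ cStat w := by
  classical
  have hS := Finset.mem_iff_pos_and_le_card (S := Finset.univ.filter (IsCPosition w))
    (fun j hj => (Finset.mem_filter.1 hj).2.1)
    (fun j hj k hk₀ hkj =>
      Finset.mem_filter.2 ⟨Finset.mem_univ k, (Finset.mem_filter.1 hj).2.of_lt h₁ hk₀ hkj⟩) i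
  have hc : cStat w = (Finset.univ.filter (IsCPosition w)).card := by
    rw [cStat_eq_card, Nat.card_eq_fintype_card, Fintype.card_subtype]
  rw [Finset.mem_filter_univ] at hS
  rw [hc, hS, Fin.lt_def, Fin.val_zero]
  omega

end CPositions

theorem cStat_positions_general (n : ℕ) (w : Equiv.Perm (Fin (n + 1)))
    (h1 : ¬ ContainsPattern w [3, 4, 2, 1]) (h2 : ¬ ContainsPattern w [4, 3, 1, 2])
    (h3 : ¬ ContainsPattern w [4, 3, 2, 1]) :
    (∀ i : Fin (n + 1),
        (0 < i ∧ i < w⁻¹ 0 ∧ 0 < w i ∧ w i < w 0) ↔ 1 ≤ (i : ℕ) ∧ (i : ℕ) ≤ cStat w) ∧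
      ∀ i : Fin (n + 1), 1 ≤ (i : ℕ) → (i : ℕ) ≤ cStat w → w i = i :=
  ⟨isCPosition_iff_le_cStat h1, fun i hi hic =>
    ((isCPosition_iff_le_cStat h1 i).2 ⟨hi, hic⟩).apply_eq h1 h2 h3⟩

/-- if `w(1) ≠ 1` (in 1-indexed notation; here `w 0 ≠ 0`) and `w` avoids
the four patterns, then the set defining `c(w)` is exactly the 0-indexed positions
`{1, …, c}` and `w` fixes each of these positions. -/
theorem cStat_positions (n : ℕ) (w : Equiv.Perm (Fin (n + 1))) (hw : w 0 ≠ 0)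
    (h1 : ¬ ContainsPattern w [3, 4, 2, 1]) (h2 : ¬ ContainsPattern w [4, 3, 1, 2])
    (h3 : ¬ ContainsPattern w [4, 3, 2, 1]) (h4 : ¬ ContainsPattern w [4, 5, 6, 1, 2, 3]) :
    (∀ i : Fin (n + 1),
        (0 < i ∧ i < w⁻¹ 0 ∧ 0 < w i ∧ w i < w 0) ↔ 1 ≤ (i : ℕ) ∧ (i : ℕ) ≤ cStat w) ∧
      ∀ i : Fin (n + 1), 1 ≤ (i : ℕ) → (i : ℕ) ≤ cStat w → w i = i :=
  cStat_positions_general n w h1 h2 h3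
end

section
/- Let w be a permutation of {1,…,n} avoiding the patterns 321 and 3412, and suppose w(k) > w(k+1) for some 1 ≤ k ≤ n−1. Then: (i) for all i, j with i ≤ k < j, (w·s_k)(i) < (w·s_k)(j); and (ii) w·s_k also avoids the patterns 321 and 3412. -/
/-! The transposition `s_k` sends positions `a ≤ k < b` to `a' < k` or `a' = k+1` and to
`b' = k` or `b' > k+1`. If `w(a') > w(b')`, then together with the descent `w(k) > w(k+1)` the
positions `a', k, k+1, b'` exhibit a `321` or a `3412` in `w`. Hence an occurrence of `321`
or `3412` in `w·s_k`, whose first entry exceeds its last, lies on one side of `k`, where `s_k`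
preserves the order of positions, and so it is already an occurrence in `w`. -/

open Equiv

section
variable {n : ℕ}

theorem containsPattern_321_of_lt {w : Perm (Fin n)} {a b c : Fin n} (hab : a < b) (hbc : b < c)
    (hwcb : w c < w b) (hwba : w b < w a) : ContainsPattern w [3, 2, 1] := by
  refine ⟨![a, b, c], Fin.strictMono_iff_lt_succ.2 ?_, ?_⟩
  · intro i; fin_cases i <;> simpa
  · intro i j; fin_cases i <;> fin_cases j <;> simp <;> order

theorem containsPattern_3412_of_lt {w : Perm (Fin n)} {a b c d : Fin n} (hab : a < b)
    (hbc : b < c) (hcd : c < d) (hwcd : w c < w d) (hwda : w d < w a) (hwab : w a < w b) :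
    ContainsPattern w [3, 4, 1, 2] := by
  refine ⟨![a, b, c, d], Fin.strictMono_iff_lt_succ.2 ?_, ?_⟩
  · intro i; fin_cases i <;> simpa
  · intro i j; fin_cases i <;> fin_cases j <;> simp <;> order

theorem lt_of_avoids_321_3412 {w : Perm (Fin n)} (h321 : ¬ ContainsPattern w [3, 2, 1])
    (h3412 : ¬ ContainsPattern w [3, 4, 1, 2]) {p q a b : Fin n} (hpq : p < q)
    (hdesc : w q < w p) (ha : a < p ∨ a = q) (hb : b = p ∨ q < b) : w a < w b := by
  rcases ha with ha | rfl <;> rcases hb with rfl | hb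
  · by_contra! hpa
    exact h321 (containsPattern_321_of_lt ha hpq hdesc (hpa.lt_of_ne' (w.injective.ne ha.ne)))
  · by_contra! hba
    have hba := hba.lt_of_ne' (w.injective.ne (ha.trans (hpq.trans hb)).ne)
    rcases lt_or_gt_of_ne (w.injective.ne ha.ne) with hap | hpa
    · rcases lt_or_gt_of_ne (w.injective.ne hb.ne') with hbq | hqb
      · exact h321 (containsPattern_321_of_lt hpq hb hbq hdesc)
      · exact h3412 (containsPattern_3412_of_lt ha hpq hb hqb hba hap)
    · exact h321 (containsPattern_321_of_lt ha hpq hdesc hpa)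
  · exact hdesc
  · by_contra! hbq
    exact h321 (containsPattern_321_of_lt hpq hb (hbq.lt_of_ne (w.injective.ne hb.ne')) hdesc)

theorem adjTransposition_apply_val {k : ℕ} (hk : k + 1 < n) (i : Fin n) :
    (adjTransposition n k i : ℕ) =
      if (i : ℕ) = k then k + 1 else if (i : ℕ) = k + 1 then k else i := by
  rw [adjTransposition, dif_pos hk, swap_apply_def]
  simp only [Fin.ext_iff]
  split_ifs <;> rfl

theorem adjTransposition_lt_adjTransposition {k : ℕ} {i j : Fin n} (hij : i < j)
    (h : ¬ ((i : ℕ) = k ∧ (j : ℕ) = k + 1)) :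
    adjTransposition n k i < adjTransposition n k j := by
  by_cases hk : k + 1 < n
  · rw [Fin.lt_def, adjTransposition_apply_val hk, adjTransposition_apply_val hk]
    rw [Fin.lt_def] at hij
    split_ifs <;> omega
  · simpa [adjTransposition, hk] using hij

theorem ContainsPattern.of_mul_adjTransposition {w : Perm (Fin n)} {k : ℕ} {p : List ℕ}
    (h : ContainsPattern (w * adjTransposition n k) p)
    (hcross : ∀ i j : Fin n, (i : ℕ) ≤ k → k < (j : ℕ) →
      (w * adjTransposition n k) i < (w * adjTransposition n k) j)
    (hp : p ≠ []) (hpat : p.getLast hp < p.head hp) : ContainsPattern w p := by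
  obtain ⟨f, hf, hfp⟩ := h
  have hlen : 0 < p.length := List.length_pos_iff.2 hp
  let first : Fin p.length := ⟨0, hlen⟩
  let last : Fin p.length := ⟨p.length - 1, by omega⟩
  refine ⟨adjTransposition n k ∘ f, fun a b hab => ?_, hfp⟩
  refine adjTransposition_lt_adjTransposition (hf hab) fun ⟨ha, hb⟩ => ?_
  have hfirst : (f first : ℕ) ≤ k := ha ▸ hf.monotone (Fin.le_def.2 (Nat.zero_le _))
  have hlast : k < (f last : ℕ) :=
    calc k < f b := by omega
      _ ≤ f last := hf.monotone (Fin.le_def.2 (Nat.le_sub_one_of_lt b.isLt))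
  refine (hcross _ _ hfirst hlast).asymm ((hfp last first).2 ?_)
  simpa [List.getLast_eq_getElem, List.head_eq_getElem] using hpat

end

/-- if `w` avoids 321 and 3412 and has a descent at `k` (0-indexed), then
`w·s_k` has no inversion across position `k`, and `w·s_k` still avoids 321 and 3412. -/
theorem descent_step_avoids (n k : ℕ) (hk : k + 1 < n) (w : Equiv.Perm (Fin n))
    (h1 : ¬ ContainsPattern w [3, 2, 1]) (h2 : ¬ ContainsPattern w [3, 4, 1, 2])
    (hdesc : w ⟨k + 1, hk⟩ < w ⟨k, Nat.lt_of_succ_lt hk⟩) :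
    (∀ i j : Fin n, (i : ℕ) ≤ k → k < (j : ℕ) →
        (w * adjTransposition n k) i < (w * adjTransposition n k) j) ∧
      ¬ ContainsPattern (w * adjTransposition n k) [3, 2, 1] ∧
        ¬ ContainsPattern (w * adjTransposition n k) [3, 4, 1, 2] := by
  have hcross : ∀ i j : Fin n, (i : ℕ) ≤ k → k < (j : ℕ) →
      (w * adjTransposition n k) i < (w * adjTransposition n k) j := by
    intro i j hi hj
    refine lt_of_avoids_321_3412 h1 h2 (Fin.lt_def.2 k.lt_succ_self) hdesc ?_ ?_ <;>
      simp only [Fin.lt_def, Fin.ext_iff, adjTransposition_apply_val hk] <;> split_ifs <;> omega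
  exact ⟨hcross, fun h => h1 (h.of_mul_adjTransposition hcross (by simp) (by decide)),
    fun h => h2 (h.of_mul_adjTransposition hcross (by simp) (by decide))⟩
end
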